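/- arXiv:2410.14188 — 2 statements merged into one kernel-verified Lean document; each statement's English description precedes it below -/
import Mathlib

section
/- For the free group F_S on a set S, a ring R, and homomorphisms h_1, …, h_n : F_S → R, the letter-braiding function I_{[h_1|⋯|h_n]} : R[F_S] → R satisfies I_{[h_1|⋯|h_n]}((s_1-1)(s_2-1)⋯(s_k-1)) = h_1(s_1)⋯h_n(s_n) if k = n, and 0 if k ≠ n, for any generators s_1, …, s_k ∈ S. -/
open scoped TensorProduct DirectSum

/-- The value of the functional `h : S → R` on a signed letter: `h s` on `s ∈ S`
and `-(h s)` on `s⁻¹` (as dictated by `h` extending to a homomorphism `F_S → R`),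
as a linear map in `h`. -/
noncomputable def letterEval (R : Type*) [CommRing R] {S : Type*} (p : S × Bool) :
    (S → R) →ₗ[R] R :=
  if p.2 then LinearMap.proj p.1 else -(LinearMap.proj p.1)

/-- The admissibility condition on a tuple of indices `i₁ ≤ … ≤ iₙ` into a word `L`:
consecutive indices satisfy `iⱼ <_w i_{j+1}`, which is strict `<` if the letter at `iⱼ`
is positive and `≤` if it is an inverse letter. -/
def Admissible {S : Type*} (L : List (S × Bool)) {n : ℕ} (ι : Fin n → Fin L.length) : Prop :=
  ∀ j i : Fin n, (i : ℕ) = (j : ℕ) + 1 →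
    (if (L.get (ι j)).2 then ι j < ι i else ι j ≤ ι i)

open Classical in
/-- The letter-braiding function of a pure tensor `[h₁|⋯|hₙ]` of functionals on
the free group `F_S`, computed on the reduced word of `w`:
`I(w) = Σ_{i₁ <_w ⋯ <_w iₙ} h₁(s_{i₁}) ⋯ hₙ(s_{iₙ})`. -/
noncomputable def lbPure {R S : Type*} [CommRing R] [DecidableEq S] {n : ℕ}
    (hs : Fin n → S → R) (w : FreeGroup S) : R :=
  ∑ ι ∈ Finset.univ.filter
      (fun ι : Fin n → Fin w.toWord.length => Admissible w.toWord ι),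
    ∏ j : Fin n, letterEval R (w.toWord.get (ι j)) (hs j)

open Classical in
/-- The letter-braiding multilinear map: `(h₁, …, hₙ) ↦ I_{[h₁|⋯|hₙ]}`. -/
noncomputable def lbMulti (R S : Type*) [CommRing R] [DecidableEq S] (n : ℕ) :
    MultilinearMap R (fun _ : Fin n => (S → R)) (FreeGroup S → R) :=
  MultilinearMap.pi fun w =>
    ∑ ι ∈ Finset.univ.filter
        (fun ι : Fin n → Fin w.toWord.length => Admissible w.toWord ι),
      (MultilinearMap.mkPiAlgebra R (Fin n) R).compLinearMap
        (fun j => letterEval R (w.toWord.get (ι j)))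

/-- The letter-braiding linear map on the tensor algebra `T(R^S) = ⊕ₙ (R^S)^{⊗n}`,
sending a tensor `T` to its letter-braiding function `I_T : F_S → R`. -/
noncomputable def LB (R S : Type*) [CommRing R] [DecidableEq S] :
    (⨁ n : ℕ, ⨂[R]^n (S → R)) →ₗ[R] (FreeGroup S → R) :=
  DirectSum.toModule R ℕ _ fun n => PiTensorProduct.lift (lbMulti R S n)

/-- The `R`-linear extension of a function on `F_S` to the group ring `R[F_S]`. -/
noncomputable def linExt {R S : Type*} [CommRing R] (f : FreeGroup S → R) :
    MonoidAlgebra R (FreeGroup S) →ₗ[R] R :=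
  Finsupp.linearCombination R f ∘ₗ (MonoidAlgebra.coeffLinearEquiv R).toLinearMap

/-!
On a positive word (one without inverse letters) the admissible index tuples are exactly the
strictly increasing ones. Splitting them according to whether they use the first letter gives
`I_{[h₁|⋯|hₙ]}(s w) = I_{[h₁|⋯|hₙ]}(w) + h₁(s) I_{[h₂|⋯|hₙ]}(w)`, while `I_{[]} = 1`.
Since `(s₂-1)⋯(s_k-1)` is a combination of positive words, linearity turns this into
`I_{[h₁|⋯|hₙ]}((s₁-1) x) = h₁(s₁) I_{[h₂|⋯|hₙ]}(x)` (and `0` when `n = 0`), so induction on `k`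
strips one factor and one `hᵢ` at a time, ending at `I_{[h₁|⋯|hₙ]}(1)`, which is `1` if `n = 0`
and `0` otherwise.
-/

namespace LetterBraiding

theorem strictMono_iff_lt_of_val_eq_succ {α : Type*} [Preorder α] {n : ℕ} {f : Fin n → α} :
    StrictMono f ↔ ∀ j i : Fin n, (i : ℕ) = j + 1 → f j < f i := by
  refine ⟨fun h j i hij => h (Fin.lt_def.2 (by omega)), fun h => ?_⟩
  cases n with
  | zero => exact fun a => a.elim0
  | succ n => exact Fin.strictMono_iff_lt_succ.2 fun i => h _ _ (by simp)

theorem exists_strictMono_succ_comp {p m : ℕ} {ι : Fin p → Fin (m + 1)} (hι : StrictMono ι)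
    (h0 : ∀ j, ι j ≠ 0) : ∃ κ : Fin p → Fin m, StrictMono κ ∧ Fin.succ ∘ κ = ι :=
  ⟨fun j => (ι j).pred (h0 j), fun _ _ hab => Fin.pred_lt_pred_iff.2 (hι hab),
    funext fun _ => Fin.succ_pred _ _⟩

open Classical in
theorem sum_strictMono_fin_succ {M : Type*} [AddCommMonoid M] {m n : ℕ}
    (F : (Fin (n + 1) → Fin (m + 1)) → M) :
    ∑ ι with StrictMono ι, F ι =
      ∑ κ : Fin (n + 1) → Fin m with StrictMono κ, F (Fin.succ ∘ κ) +
        ∑ κ : Fin n → Fin m with StrictMono κ, F (Fin.cons 0 (Fin.succ ∘ κ)) := by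
  rw [← Finset.sum_filter_not_add_sum_filter _ (fun ι => ι 0 = 0), Finset.filter_filter,
    Finset.filter_filter]
  congr 1
  · symm
    refine Finset.sum_nbij (Fin.succ ∘ ·) ?_ ?_ ?_ fun _ _ => rfl
    · intro κ hκ
      simp only [Finset.mem_filter, Finset.mem_univ, true_and] at hκ ⊢
      exact ⟨Fin.strictMono_succ.comp hκ, Fin.succ_ne_zero _⟩
    · exact fun κ _ κ' _ h => funext fun j => Fin.succ_injective _ (congrFun h j)
    · intro ι hι
      simp only [Finset.coe_filter, Finset.mem_univ, true_and, Set.mem_ofPred_eq] at hι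
      obtain ⟨κ, hκ, rfl⟩ := exists_strictMono_succ_comp hι.1 fun j hj =>
        hι.2 (Fin.le_zero_iff.1 (hj ▸ hι.1.monotone (Fin.zero_le j)))
      exact ⟨κ, by simpa using hκ, rfl⟩
  · symm
    refine Finset.sum_nbij (fun κ => Fin.cons 0 (Fin.succ ∘ κ)) ?_ ?_ ?_ fun _ _ => rfl
    · intro κ hκ
      simp only [Finset.mem_filter, Finset.mem_univ, true_and] at hκ ⊢
      exact ⟨Fin.strictMono_cons.2 ⟨fun j => Fin.succ_pos _, Fin.strictMono_succ.comp hκ⟩, rfl⟩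
    · exact fun κ _ κ' _ h =>
        funext fun j => Fin.succ_injective _ (congrFun (Fin.cons_right_injective _ h) j)
    · intro ι hι
      simp only [Finset.coe_filter, Finset.mem_univ, true_and, Set.mem_ofPred_eq] at hι
      obtain ⟨hmono, hι0⟩ := hι
      rw [← Fin.cons_self_tail ι, Fin.strictMono_cons] at hmono
      obtain ⟨κ, hκ, hκι⟩ := exists_strictMono_succ_comp hmono.2 fun j =>
        (hι0 ▸ hmono.1 j).ne'
      refine ⟨κ, by simpa using hκ, ?_⟩
      simp only [hκι, ← hι0, Fin.cons_self_tail]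

theorem admissible_iff_strictMono {S : Type*} {L : List (S × Bool)} (hL : ∀ p ∈ L, p.2 = true)
    {n : ℕ} (ι : Fin n → Fin L.length) : Admissible L ι ↔ StrictMono ι := by
  simp only [Admissible, hL _ (List.get_mem _ _), if_true, strictMono_iff_lt_of_val_eq_succ]

section PositiveWords

variable {S : Type*} [DecidableEq S]

def IsPositive (g : FreeGroup S) : Prop :=
  ∀ p ∈ g.toWord, p.2 = true

theorem isPositive_one : IsPositive (1 : FreeGroup S) := by
  simp [IsPositive]

theorem IsPositive.toWord_of_mul {g : FreeGroup S} (hg : IsPositive g) (a : S) :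
    (FreeGroup.of a * g).toWord = (a, true) :: g.toWord := by
  rw [FreeGroup.toWord_mul, FreeGroup.toWord_of, List.singleton_append]
  refine FreeGroup.IsReduced.reduce_eq ?_
  cases hw : g.toWord with
  | nil => exact FreeGroup.IsReduced.singleton
  | cons b L =>
    rw [FreeGroup.isReduced_cons_cons, ← hw]
    exact ⟨fun _ => (hg b (hw ▸ List.mem_cons_self)).symm, FreeGroup.isReduced_toWord⟩

theorem IsPositive.of_mul {g : FreeGroup S} (hg : IsPositive g) (a : S) :
    IsPositive (FreeGroup.of a * g) := by
  rw [IsPositive, hg.toWord_of_mul, List.forall_mem_cons]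
  exact ⟨rfl, hg⟩

end PositiveWords

section LbPure

variable {R S : Type*} [CommRing R] [DecidableEq S]

open Classical in
theorem IsPositive.lbPure_eq {w : FreeGroup S} (hw : IsPositive w) {n : ℕ}
    (hs : Fin n → S → R) :
    lbPure hs w = ∑ ι : Fin n → Fin w.toWord.length with StrictMono ι,
      ∏ j, letterEval R (w.toWord.get (ι j)) (hs j) :=
  Finset.sum_congr (Finset.filter_congr fun ι _ => admissible_iff_strictMono hw ι)
    fun _ _ => rfl

theorem lbPure_fin_zero (hs : Fin 0 → S → R) (w : FreeGroup S) : lbPure hs w = 1 := by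
  classical
  rw [lbPure, Finset.filter_true_of_mem fun ι _ j => j.elim0]
  simp

theorem lbPure_one {n : ℕ} (hs : Fin (n + 1) → S → R) : lbPure hs (1 : FreeGroup S) = 0 :=
  Finset.sum_eq_zero fun ι _ => absurd (ι 0).2 (by simp)

theorem IsPositive.lbPure_of_mul {g : FreeGroup S} (hg : IsPositive g) {n : ℕ}
    (hs : Fin (n + 1) → S → R) (a : S) :
    lbPure hs (FreeGroup.of a * g) = lbPure hs g + hs 0 a * lbPure (Fin.tail hs) g := by
  rw [(hg.of_mul a).lbPure_eq, hg.lbPure_eq, hg.lbPure_eq, hg.toWord_of_mul]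
  refine (sum_strictMono_fin_succ (m := g.toWord.length) _).trans ?_
  simp [Fin.prod_univ_succ, letterEval, Finset.mul_sum, Fin.tail]

end LbPure

section GroupRing

theorem linExt_of {R S : Type*} [CommRing R] (f : FreeGroup S → R) (g : FreeGroup S) :
    linExt f (MonoidAlgebra.of R (FreeGroup S) g) = f g := by
  simp [linExt, MonoidAlgebra.of_apply]

variable (R S : Type*) [CommRing R] [DecidableEq S]

noncomputable def positiveSpan : Submodule R (MonoidAlgebra R (FreeGroup S)) :=
  Submodule.span R (MonoidAlgebra.of R (FreeGroup S) '' {g | IsPositive g})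

variable {R S}

theorem sub_one_mul_mem_positiveSpan (a : S) {x : MonoidAlgebra R (FreeGroup S)}
    (hx : x ∈ positiveSpan R S) :
    (MonoidAlgebra.of R (FreeGroup S) (FreeGroup.of a) - 1) * x ∈ positiveSpan R S := by
  induction hx using Submodule.span_induction with
  | mem y hy =>
    obtain ⟨g, hg, rfl⟩ := hy
    rw [sub_mul, one_mul, ← map_mul]
    exact sub_mem (Submodule.subset_span ⟨_, IsPositive.of_mul hg a, rfl⟩)
      (Submodule.subset_span ⟨g, hg, rfl⟩)
  | zero => simp
  | add x y _ _ hx hy => simpa only [mul_add] using add_mem hx hy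
  | smul r x _ hx => simpa only [mul_smul_comm] using Submodule.smul_mem _ r hx

theorem linExt_sub_one_mul {f f' : FreeGroup S → R} {a : S} {c : R}
    (h : ∀ g, IsPositive g → f (FreeGroup.of a * g) - f g = c * f' g)
    {x : MonoidAlgebra R (FreeGroup S)} (hx : x ∈ positiveSpan R S) :
    linExt f ((MonoidAlgebra.of R (FreeGroup S) (FreeGroup.of a) - 1) * x) =
      c * linExt f' x := by
  induction hx using Submodule.span_induction with
  | mem y hy =>
    obtain ⟨g, hg, rfl⟩ := hy
    rw [sub_mul, one_mul, ← map_mul, map_sub, linExt_of, linExt_of, linExt_of, h g hg]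
  | zero => simp
  | add x y _ _ hx hy => rw [mul_add, map_add, map_add, hx, hy, mul_add]
  | smul r x _ hx => rw [mul_smul_comm, map_smul, map_smul, hx, smul_eq_mul, smul_eq_mul,
      mul_left_comm]

theorem prod_sub_one_mem_positiveSpan {k : ℕ} (s : Fin k → S) :
    (List.ofFn fun i => MonoidAlgebra.of R (FreeGroup S) (FreeGroup.of (s i)) - 1).prod ∈
      positiveSpan R S := by
  induction k with
  | zero => exact Submodule.subset_span ⟨1, isPositive_one, map_one _⟩
  | succ k ih =>
    rw [List.ofFn_succ, List.prod_cons]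
    exact sub_one_mul_mem_positiveSpan _ (ih _)

end GroupRing

end LetterBraiding

open LetterBraiding in
/-- Letter-braiding evaluated on products `(s₁-1)⋯(s_k-1)` of generators in the group
ring: it gives `h₁(s₁)⋯hₙ(sₙ)` when `k = n` and `0` otherwise. -/
theorem letterBraiding_on_products (R S : Type*) [CommRing R] [DecidableEq S]
    (n k : ℕ) (hs : Fin n → S → R) (s : Fin k → S) :
    linExt (lbPure hs)
        ((List.ofFn fun i =>
          (MonoidAlgebra.of R (FreeGroup S) (FreeGroup.of (s i)) :
            MonoidAlgebra R (FreeGroup S)) - 1).prod) =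
      if hkn : k = n then ∏ i : Fin k, hs (Fin.cast hkn i) (s i) else 0 := by
  induction k generalizing n with
  | zero =>
    rw [List.ofFn_zero, List.prod_nil, ← map_one (MonoidAlgebra.of R (FreeGroup S)), linExt_of]
    cases n with
    | zero => simp [lbPure_fin_zero]
    | succ n => simp [lbPure_one]
  | succ k ih =>
    rw [List.ofFn_succ, List.prod_cons]
    cases n with
    | zero =>
      rw [linExt_sub_one_mul (f' := lbPure hs) (c := 0) (by simp [lbPure_fin_zero])
        (prod_sub_one_mem_positiveSpan _)]
      simp
    | succ n =>
      rw [linExt_sub_one_mul (fun g hg => by rw [hg.lbPure_of_mul, add_sub_cancel_left])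
        (prod_sub_one_mem_positiveSpan _), ih n (Fin.tail hs)]
      by_cases hkn : k = n
      · subst hkn
        simp [Fin.prod_univ_succ, Fin.tail]
      · simp [hkn]
end

section
/- Let F be the free group on a set S and T an element of the tensor algebra T(R^S). If the letter-braiding function I_T : F → R is conjugation-invariant, then I_T((s_1-1)⋯(s_k-1)) = I_T((s_2-1)⋯(s_k-1)(s_1-1)) for all s_1, …, s_k ∈ S. -/
open scoped TensorProduct DirectSum

theorem MonoidAlgebra.map_mul_comm_of_map_of_mul_comm {R G M : Type*} [CommSemiring R]
    [Monoid G] [AddCommMonoid M] [Module R M] (φ : MonoidAlgebra R G →ₗ[R] M)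
    (hφ : ∀ g h : G, φ (of R G (g * h)) = φ (of R G (h * g)))
    (u v : MonoidAlgebra R G) : φ (u * v) = φ (v * u) := by
  induction u using MonoidAlgebra.induction_on with
  | of g =>
    induction v using MonoidAlgebra.induction_on with
    | of h => simpa only [map_mul] using hφ g h
    | add v₁ v₂ h₁ h₂ => simp only [mul_add, add_mul, map_add, h₁, h₂]
    | smul r v hv => simp only [mul_smul_comm, smul_mul_assoc, map_smul, hv]
  | add u₁ u₂ h₁ h₂ => simp only [mul_add, add_mul, map_add, h₁, h₂]
  | smul r u hu => simp only [mul_smul_comm, smul_mul_assoc, map_smul, hu]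

theorem linExt_of {R S : Type*} [CommRing R] (f : FreeGroup S → R) (g : FreeGroup S) :
    linExt f (MonoidAlgebra.of R (FreeGroup S) g) = f g :=
  (Finsupp.linearCombination_single R 1 g).trans (one_smul R (f g))

theorem linExt_mul_comm_of_conj_invariant {R S : Type*} [CommRing R] (f : FreeGroup S → R)
    (hf : ∀ g w : FreeGroup S, f (g * w * g⁻¹) = f w)
    (u v : MonoidAlgebra R (FreeGroup S)) :
    linExt f (u * v) = linExt f (v * u) := by
  refine MonoidAlgebra.map_mul_comm_of_map_of_mul_comm _ (fun g h => ?_) u v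
  rw [linExt_of, linExt_of, ← hf g (h * g), ← mul_assoc, mul_inv_cancel_right]

/-- If the letter-braiding function `I_T` of a tensor `T ∈ T(R^S)` is
conjugation-invariant, then its linear extension to the group ring satisfies
`I_T((s₁-1)(s₂-1)⋯(s_k-1)) = I_T((s₂-1)⋯(s_k-1)(s₁-1))` for all generators `sᵢ ∈ S`. -/
theorem letterBraiding_cyclic_of_classFunction (R S : Type*) [CommRing R] [DecidableEq S]
    (T : ⨁ n : ℕ, ⨂[R]^n (S → R))
    (hinv : ∀ g w : FreeGroup S, LB R S T (g * w * g⁻¹) = LB R S T w)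
    (a : S) (l : List S) :
    linExt (LB R S T)
        ((MonoidAlgebra.of R (FreeGroup S) (FreeGroup.of a) - 1) *
          (l.map fun s =>
            (MonoidAlgebra.of R (FreeGroup S) (FreeGroup.of s) :
              MonoidAlgebra R (FreeGroup S)) - 1).prod) =
      linExt (LB R S T)
        ((l.map fun s =>
            (MonoidAlgebra.of R (FreeGroup S) (FreeGroup.of s) :
              MonoidAlgebra R (FreeGroup S)) - 1).prod *
          (MonoidAlgebra.of R (FreeGroup S) (FreeGroup.of a) - 1)) :=
  linExt_mul_comm_of_conj_invariant (LB R S T) hinv _ _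
end
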